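/- Let q be a nonzero real number. Then there exists a unique star structure ★ₑ on SL_q(2,ℂ) with a^{★ₑ} = d, b^{★ₑ} = −q⁻¹c, c^{★ₑ} = −qb, d^{★ₑ} = a, and it is a Hopf star structure: Δ(x^{★ₑ}) = (★ₑ ⊗ ★ₑ)(Δ(x)) for all x, where Δ is the matrix comultiplication. (This real form is the quantum group SU_q(2).) -/

import Mathlib

noncomputable section

open FreeAlgebra
open scoped TensorProduct

/-- The Manin relations with parameter `q` together with the determinant relation
`a d − q⁻¹ b c = 1`. -/
inductive SLRel (q : ℂ) : FreeAlgebra ℂ (Fin 4) → FreeAlgebra ℂ (Fin 4) → Prop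
  | ab : SLRel q (ι ℂ 0 * ι ℂ 1) (q⁻¹ • (ι ℂ 1 * ι ℂ 0))
  | ac : SLRel q (ι ℂ 0 * ι ℂ 2) (q⁻¹ • (ι ℂ 2 * ι ℂ 0))
  | bd : SLRel q (ι ℂ 1 * ι ℂ 3) (q⁻¹ • (ι ℂ 3 * ι ℂ 1))
  | cd : SLRel q (ι ℂ 2 * ι ℂ 3) (q⁻¹ • (ι ℂ 3 * ι ℂ 2))
  | bc : SLRel q (ι ℂ 1 * ι ℂ 2) (ι ℂ 2 * ι ℂ 1)
  | ad : SLRel q (ι ℂ 0 * ι ℂ 3 - ι ℂ 3 * ι ℂ 0) ((q⁻¹ - q) • (ι ℂ 1 * ι ℂ 2))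
  | det : SLRel q (ι ℂ 0 * ι ℂ 3 - q⁻¹ • (ι ℂ 1 * ι ℂ 2)) 1

/-- `SL_q(2,ℂ)`. -/
abbrev SLq (q : ℂ) := RingQuot (SLRel q)

/-- The images of the generators `a, b, c, d` in `SL_q(2,ℂ)`. -/
def gen (q : ℂ) (i : Fin 4) : SLq q := RingQuot.mkAlgHom ℂ (SLRel q) (ι ℂ i)

/-- A star structure on a complex algebra: additive, conjugate-linear,
antimultiplicative, unital, involutive. -/
def IsStar {A : Type*} [Ring A] [Algebra ℂ A] (st : A → A) : Prop :=
  (∀ x y : A, st (x + y) = st x + st y) ∧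
  (∀ (z : ℂ) (x : A), st (z • x) = (starRingEnd ℂ) z • st x) ∧
  (∀ x y : A, st (x * y) = st y * st x) ∧
  st 1 = 1 ∧
  (∀ x : A, st (st x) = x)

/-- `Δ` is the matrix comultiplication of `SL_q(2,ℂ)`. -/
def IsComul (q : ℂ) (Δ : SLq q →ₐ[ℂ] (SLq q ⊗[ℂ] SLq q)) : Prop :=
  Δ (gen q 0) = gen q 0 ⊗ₜ[ℂ] gen q 0 + gen q 1 ⊗ₜ[ℂ] gen q 2 ∧
  Δ (gen q 1) = gen q 0 ⊗ₜ[ℂ] gen q 1 + gen q 1 ⊗ₜ[ℂ] gen q 3 ∧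
  Δ (gen q 2) = gen q 2 ⊗ₜ[ℂ] gen q 0 + gen q 3 ⊗ₜ[ℂ] gen q 2 ∧
  Δ (gen q 3) = gen q 2 ⊗ₜ[ℂ] gen q 1 + gen q 3 ⊗ₜ[ℂ] gen q 3

/-- The prescribed values of the star structure on the generators. -/
def StarVals (q : ℂ) (st : SLq q → SLq q) : Prop :=
  st (gen q 0) = gen q 3 ∧ st (gen q 1) = (-q⁻¹) • gen q 2 ∧
  st (gen q 2) = (-q) • gen q 1 ∧ st (gen q 3) = gen q 0

/-!
A conjugate-linear unital antihomomorphism `A → B` is the same thing as a `ℂ`-algebra map from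
`A` to the opposite of `B` with complex-conjugated scalars.  Through this dictionary the
prescribed values on `a, b, c, d` define such a map on the free algebra, and it descends to
`SL_q(2,ℂ)` because, `q` being real, it sends each defining relation to another one
(`ab = q⁻¹ba` to `cd = q⁻¹dc`, and so on).  Since `a, b, c, d` generate the algebra, two
conjugate-linear antihomomorphisms that agree on them are equal, and the composite of two of
them is the identity once it fixes them.  This gives uniqueness and involutivity, and also the
Hopf property: `Δ ∘ ★` and `(★ ⊗ ★) ∘ Δ` are conjugate-linear antihomomorphisms that agree on
the generators by a direct computation.
-/

open MulOpposite

structure IsConjAntiHom {A B : Type*} [Semiring A] [Algebra ℂ A] [Semiring B]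
    [Algebra ℂ B] (f : A → B) : Prop where
  map_add : ∀ x y, f (x + y) = f x + f y
  map_smul : ∀ (z : ℂ) x, f (z • x) = starRingEnd ℂ z • f x
  map_mul : ∀ x y, f (x * y) = f y * f x
  map_one : f 1 = 1

theorem isStar_iff {A : Type*} [Ring A] [Algebra ℂ A] {st : A → A} :
    IsStar st ↔ IsConjAntiHom st ∧ Function.Involutive st :=
  ⟨fun ⟨h₁, h₂, h₃, h₄, h₅⟩ => ⟨⟨h₁, h₂, h₃, h₄⟩, h₅⟩,
    fun ⟨⟨h₁, h₂, h₃, h₄⟩, h₅⟩ => ⟨h₁, h₂, h₃, h₄, h₅⟩⟩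

namespace IsConjAntiHom

variable {A B C D : Type*} [Semiring A] [Algebra ℂ A] [Semiring B] [Algebra ℂ B]
  [Semiring C] [Algebra ℂ C] [Semiring D] [Algebra ℂ D] {f g : A → B}

theorem map_algebraMap (hf : IsConjAntiHom f) (z : ℂ) :
    f (algebraMap ℂ A z) = algebraMap ℂ B (starRingEnd ℂ z) := by
  rw [Algebra.algebraMap_eq_smul_one, hf.map_smul, hf.map_one, Algebra.algebraMap_eq_smul_one]

theorem map_sub {A B : Type*} [Ring A] [Algebra ℂ A] [Ring B] [Algebra ℂ B] {f : A → B}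
    (hf : IsConjAntiHom f) (x y : A) : f (x - y) = f x - f y := by
  rw [eq_sub_iff_add_eq, ← hf.map_add, sub_add_cancel]

def toSemilinearMap (hf : IsConjAntiHom f) : A →ₛₗ[starRingEnd ℂ] B where
  toFun := f
  map_add' := hf.map_add
  map_smul' := hf.map_smul

theorem ext {s : Set A} (hs : Algebra.adjoin ℂ s = ⊤) (hf : IsConjAntiHom f)
    (hg : IsConjAntiHom g) (h : s.EqOn f g) : f = g := by
  funext x
  have hx : x ∈ Algebra.adjoin ℂ s := hs ▸ Algebra.mem_top
  induction hx using Algebra.adjoin_induction with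
  | mem x hx => exact h hx
  | algebraMap z => rw [hf.map_algebraMap, hg.map_algebraMap]
  | add x y _ _ hx hy => rw [hf.map_add, hg.map_add, hx, hy]
  | mul x y _ _ hx hy => rw [hf.map_mul, hg.map_mul, hx, hy]

theorem apply_apply_eq_self {s : Set A} (hs : Algebra.adjoin ℂ s = ⊤) {f g : A → A}
    (hf : IsConjAntiHom f) (hg : IsConjAntiHom g) (h : ∀ x ∈ s, f (g x) = x) (x : A) :
    f (g x) = x := by
  have hx : x ∈ Algebra.adjoin ℂ s := hs ▸ Algebra.mem_top
  induction hx using Algebra.adjoin_induction with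
  | mem x hx => exact h x hx
  | algebraMap z => rw [hg.map_algebraMap, hf.map_algebraMap, Complex.conj_conj]
  | add x y _ _ hx hy => rw [hg.map_add, hf.map_add, hx, hy]
  | mul x y _ _ hx hy => rw [hg.map_mul, hf.map_mul, hx, hy]

theorem algHom_comp (hf : IsConjAntiHom f) (φ : B →ₐ[ℂ] C) : IsConjAntiHom (φ ∘ f) where
  map_add x y := by simp [hf.map_add]
  map_smul z x := by simp [hf.map_smul]
  map_mul x y := by simp [hf.map_mul]
  map_one := by simp [hf.map_one]

theorem comp_algHom {f : B → C} (hf : IsConjAntiHom f) (φ : A →ₐ[ℂ] B) :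
    IsConjAntiHom (f ∘ φ) where
  map_add x y := by simp [hf.map_add]
  map_smul z x := by simp [hf.map_smul]
  map_mul x y := by simp [hf.map_mul]
  map_one := by simp [hf.map_one]

theorem tensorProductMap {f : A → C} {g : B → D} (hf : IsConjAntiHom f)
    (hg : IsConjAntiHom g) :
    IsConjAntiHom (TensorProduct.map hf.toSemilinearMap hg.toSemilinearMap) where
  map_add := _root_.map_add _
  map_smul := map_smulₛₗ _
  map_mul u v := by
    induction u using TensorProduct.induction_on generalizing v with
    | zero => simp
    | add u₁ u₂ h₁ h₂ => simp [add_mul, mul_add, h₁, h₂]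
    | tmul x y =>
      induction v using TensorProduct.induction_on with
      | zero => simp
      | add v₁ v₂ h₁ h₂ => simp [mul_add, add_mul, h₁, h₂]
      | tmul x' y' => simp [toSemilinearMap, hf.map_mul, hg.map_mul]
  map_one := by simp [Algebra.TensorProduct.one_def, toSemilinearMap, hf.map_one, hg.map_one]

end IsConjAntiHom

def ConjAlg (A : Type*) : Type _ := A

namespace ConjAlg

variable {A B : Type*} [Semiring A] [Algebra ℂ A]

instance : Semiring (ConjAlg A) := ‹Semiring A›

instance : Algebra ℂ (ConjAlg A) := Algebra.compHom A (starRingEnd ℂ)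

def toConj : A ≃+* ConjAlg A := RingEquiv.refl A

theorem isConjAntiHom_of_algHom [Semiring B] [Algebra ℂ B]
    (φ : B →ₐ[ℂ] (ConjAlg A)ᵐᵒᵖ) :
    IsConjAntiHom fun x => toConj.symm (unop (φ x)) where
  map_add x y := by simp
  map_smul z x := by
    rw [map_smul, unop_smul]
    rfl
  map_mul x y := by simp
  map_one := by simp

end ConjAlg

namespace SLq

open ConjAlg TensorProduct

variable {q : ℂ}

theorem adjoin_range_gen : Algebra.adjoin ℂ (Set.range (gen q)) = ⊤ := by
  rw [show Set.range (gen q) = RingQuot.mkAlgHom ℂ (SLRel q) '' Set.range (ι ℂ) from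
      Set.range_comp _ _, ← AlgHom.map_adjoin, FreeAlgebra.adjoin_range_ι,
    Algebra.map_top, AlgHom.range_eq_top]
  exact RingQuot.mkAlgHom_surjective ℂ (SLRel q)

theorem gen0_mul_gen1 : gen q 0 * gen q 1 = q⁻¹ • (gen q 1 * gen q 0) := by
  simpa [gen] using RingQuot.mkAlgHom_rel ℂ SLRel.ab

theorem gen0_mul_gen2 : gen q 0 * gen q 2 = q⁻¹ • (gen q 2 * gen q 0) := by
  simpa [gen] using RingQuot.mkAlgHom_rel ℂ SLRel.ac

theorem gen1_mul_gen3 : gen q 1 * gen q 3 = q⁻¹ • (gen q 3 * gen q 1) := by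
  simpa [gen] using RingQuot.mkAlgHom_rel ℂ SLRel.bd

theorem gen2_mul_gen3 : gen q 2 * gen q 3 = q⁻¹ • (gen q 3 * gen q 2) := by
  simpa [gen] using RingQuot.mkAlgHom_rel ℂ SLRel.cd

theorem gen1_mul_gen2 : gen q 1 * gen q 2 = gen q 2 * gen q 1 := by
  simpa [gen] using RingQuot.mkAlgHom_rel ℂ SLRel.bc

theorem gen0_mul_gen3_sub_gen3_mul_gen0 :
    gen q 0 * gen q 3 - gen q 3 * gen q 0 = (q⁻¹ - q) • (gen q 1 * gen q 2) := by
  simpa [gen] using RingQuot.mkAlgHom_rel ℂ SLRel.ad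

theorem gen_det : gen q 0 * gen q 3 - q⁻¹ • (gen q 1 * gen q 2) = 1 := by
  simpa [gen] using RingQuot.mkAlgHom_rel ℂ SLRel.det

variable (q) in
def starGen : Fin 4 → SLq q := ![gen q 3, (-q⁻¹) • gen q 2, (-q) • gen q 1, gen q 0]

theorem starVals_iff {st : SLq q → SLq q} :
    StarVals q st ↔ ∀ i, st (gen q i) = starGen q i := by
  simp [StarVals, Fin.forall_fin_succ, starGen]

variable (q) in
def freeStar : FreeAlgebra ℂ (Fin 4) →ₐ[ℂ] (ConjAlg (SLq q))ᵐᵒᵖ :=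
  FreeAlgebra.lift ℂ fun i => op (toConj (starGen q i))

variable (hq : q ≠ 0) (hreal : starRingEnd ℂ q = q)
include hq hreal

theorem freeStar_rel ⦃x y : FreeAlgebra ℂ (Fin 4)⦄ (h : SLRel q x y) :
    freeStar q x = freeStar q y := by
  have hΨ := isConjAntiHom_of_algHom (freeStar q)
  have hι (i : Fin 4) : toConj.symm (unop (freeStar q (ι ℂ i))) = starGen q i := by
    simp [freeStar]
  apply unop_injective
  apply toConj.symm.injective
  cases h <;> simp only [hΨ.map_mul, hΨ.map_smul, hΨ.map_one, hΨ.map_sub, hι, starGen,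
    Matrix.cons_val, smul_mul_assoc, mul_smul_comm, smul_smul, map_inv₀, (starRingEnd ℂ).map_sub,
    hreal, neg_mul_neg, inv_mul_cancel₀ hq, mul_inv_cancel₀ hq, one_smul]
  case ab => rw [gen2_mul_gen3]; module
  case ac => rw [gen1_mul_gen3]; module
  case bd => rw [gen0_mul_gen2]; module
  case cd => rw [gen0_mul_gen1]; module
  case bc => exact gen1_mul_gen2
  case ad => exact gen0_mul_gen3_sub_gen3_mul_gen0
  case det => exact gen_det

theorem apply_starGen {st : SLq q → SLq q} (hst : IsConjAntiHom st) (hvals : StarVals q st)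
    (i : Fin 4) : st (starGen q i) = gen q i := by
  obtain ⟨h₀, h₁, h₂, h₃⟩ := hvals
  fin_cases i <;> simp [starGen, hst.map_smul, h₀, h₁, h₂, h₃, hreal, smul_smul, hq]

def suStar (x : SLq q) : SLq q :=
  toConj.symm (unop (RingQuot.liftAlgHom ℂ ⟨freeStar q, freeStar_rel hq hreal⟩ x))

theorem isConjAntiHom_suStar : IsConjAntiHom (suStar hq hreal) :=
  isConjAntiHom_of_algHom _

theorem starVals_suStar : StarVals q (suStar hq hreal) :=
  starVals_iff.2 fun i => by
    rw [suStar, gen, RingQuot.liftAlgHom_mkAlgHom_apply]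
    simp [freeStar]

theorem isStar_suStar : IsStar (suStar hq hreal) := by
  have hst := isConjAntiHom_suStar hq hreal
  refine isStar_iff.2 ⟨hst, hst.apply_apply_eq_self adjoin_range_gen hst ?_⟩
  rintro _ ⟨i, rfl⟩
  have hvals := starVals_suStar hq hreal
  rw [starVals_iff.1 hvals, apply_starGen hq hreal hst hvals]

theorem eq_suStar {st : SLq q → SLq q} (hst : IsConjAntiHom st) (hvals : StarVals q st) :
    st = suStar hq hreal := by
  refine hst.ext adjoin_range_gen (isConjAntiHom_suStar hq hreal) ?_
  rintro _ ⟨i, rfl⟩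
  rw [starVals_iff.1 hvals, starVals_iff.1 (starVals_suStar hq hreal)]

omit hreal

theorem comul_apply_star_gen {st : SLq q → SLq q} (hvals : StarVals q st)
    {Δ : SLq q →ₐ[ℂ] SLq q ⊗[ℂ] SLq q} (hΔ : IsComul q Δ)
    {T : SLq q ⊗[ℂ] SLq q → SLq q ⊗[ℂ] SLq q} (hT_add : ∀ u v, T (u + v) = T u + T v)
    (hT : ∀ x y, T (x ⊗ₜ y) = st x ⊗ₜ st y) (i : Fin 4) :
    Δ (st (gen q i)) = T (Δ (gen q i)) := by
  obtain ⟨h₀, h₁, h₂, h₃⟩ := hvals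
  obtain ⟨c₀, c₁, c₂, c₃⟩ := hΔ
  fin_cases i <;>
    simp [h₀, h₁, h₂, h₃, c₀, c₁, c₂, c₃, hT_add, hT, ← smul_tmul', tmul_smul, smul_smul, hq] <;>
    abel

theorem comul_comp_star {st : SLq q → SLq q} (hst : IsConjAntiHom st) (hvals : StarVals q st)
    {Δ : SLq q →ₐ[ℂ] SLq q ⊗[ℂ] SLq q} (hΔ : IsComul q Δ) :
    Δ ∘ st = TensorProduct.map hst.toSemilinearMap hst.toSemilinearMap ∘ Δ := by
  refine (hst.algHom_comp Δ).ext adjoin_range_gen ((hst.tensorProductMap hst).comp_algHom Δ) ?_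
  rintro _ ⟨i, rfl⟩
  exact comul_apply_star_gen hq hvals hΔ (map_add _) (map_tmul _ _) i

end SLq

/-- For nonzero real `q` there is a unique star structure `★ₑ` on `SL_q(2,ℂ)` with
`a^★ = d`, `b^★ = −q⁻¹ c`, `c^★ = −q b`, `d^★ = a`, and it is a Hopf star structure:
`Δ(x^★) = (★ ⊗ ★)(Δ(x))` for all `x`.  (The real form `SU_q(2)`.) -/
theorem su2_star_exists_unique (q : ℝ) (hq : q ≠ 0) :
    (∃! st : SLq ((q : ℂ)) → SLq ((q : ℂ)), IsStar st ∧ StarVals ((q : ℂ)) st) ∧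
    (∀ st : SLq ((q : ℂ)) → SLq ((q : ℂ)), IsStar st ∧ StarVals ((q : ℂ)) st →
      ∀ Δ : SLq ((q : ℂ)) →ₐ[ℂ] (SLq ((q : ℂ)) ⊗[ℂ] SLq ((q : ℂ))), IsComul ((q : ℂ)) Δ →
        ∃ T : (SLq ((q : ℂ)) ⊗[ℂ] SLq ((q : ℂ))) → (SLq ((q : ℂ)) ⊗[ℂ] SLq ((q : ℂ))),
          (∀ u v : SLq ((q : ℂ)) ⊗[ℂ] SLq ((q : ℂ)), T (u + v) = T u + T v) ∧
          (∀ x y : SLq ((q : ℂ)), T (x ⊗ₜ[ℂ] y) = st x ⊗ₜ[ℂ] st y) ∧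
          (∀ x : SLq ((q : ℂ)), Δ (st x) = T (Δ x))) := by
  have hq' : (q : ℂ) ≠ 0 := Complex.ofReal_ne_zero.mpr hq
  have hreal : starRingEnd ℂ (q : ℂ) = q := Complex.conj_ofReal q
  refine ⟨⟨SLq.suStar hq' hreal, ⟨SLq.isStar_suStar hq' hreal, SLq.starVals_suStar hq' hreal⟩,
    fun st ⟨hst, hvals⟩ => SLq.eq_suStar hq' hreal (isStar_iff.1 hst).1 hvals⟩, ?_⟩
  rintro st ⟨hst, hvals⟩ Δ hΔ
  have hanti := (isStar_iff.1 hst).1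
  exact ⟨_, map_add _, TensorProduct.map_tmul _ _,
    congrFun (SLq.comul_comp_star hq' hanti hvals hΔ)⟩
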